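/- The only minimally avoidable formula with exactly one fragment is AA. -/

import Mathlib

/-- The finite factor of the infinite word `w` starting at position `i` of length `n`. -/
def extract {α : Type*} (w : ℕ → α) (i n : ℕ) : List α :=
  (List.range n).map (fun k => w (i + k))

/-- `u` is a (finite) factor of the infinite word `w`. -/
def IsFactorOf {α : Type*} (u : List α) (w : ℕ → α) : Prop :=
  ∃ i, u = extract w i u.length

/-- A morphism (given on variables/letters) is non-erasing. -/
def NonErasing {V α : Type*} (h : V → List α) : Prop := ∀ v, h v ≠ []

/-- The image of a pattern `p` under the morphism induced by `h`. -/
def patImage {V α : Type*} (h : V → List α) (p : List V) : List α :=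
  (p.map h).flatten

/-- `h` is an occurrence of the formula `f` (a set of fragments) in the infinite word `w`:
`h` is non-erasing and the `h`-image of every fragment of `f` is a factor of `w`. -/
def OccursIn {V α : Type*} (f : Set (List V)) (h : V → List α) (w : ℕ → α) : Prop :=
  NonErasing h ∧ ∀ p ∈ f, IsFactorOf (patImage h p) w

/-- The infinite word `w` avoids the formula `f`. -/
def Avoids {V α : Type*} (w : ℕ → α) (f : Set (List V)) : Prop :=
  ∀ h : V → List α, ¬ OccursIn f h w

/-- An infinite word is recurrent if every factor occurs infinitely often. -/
def Recurrent {α : Type*} (w : ℕ → α) : Prop :=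
  ∀ u : List α, IsFactorOf u w → ∀ N, ∃ i ≥ N, u = extract w i u.length

/-- An infinite word is square-free if it has no factor `uu` with `u` nonempty. -/
def SquareFree {α : Type*} (w : ℕ → α) : Prop :=
  ∀ u : List α, u ≠ [] → ¬ IsFactorOf (u ++ u) w

/-- The formula `f'` divides the formula `f`: some non-erasing morphism maps every
fragment of `f'` to a factor of some fragment of `f`. -/
def Divides {V' V : Type*} (f' : Set (List V')) (f : Set (List V)) : Prop :=
  ∃ h : V' → List V, NonErasing h ∧ ∀ q ∈ f', ∃ p ∈ f, patImage h q <:+: p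

/-- The avoidability index of a formula: the least alphabet size over which there is an
infinite word avoiding it. -/
noncomputable def lamIdx {V : Type*} (f : Set (List V)) : ℕ :=
  sInf {n : ℕ | ∃ w : ℕ → Fin n, Avoids w f}

/-- A formula is avoidable if some infinite word over some finite alphabet avoids it. -/
def Avoidable {V : Type*} (f : Set (List V)) : Prop :=
  ∃ (n : ℕ) (w : ℕ → Fin n), Avoids w f

/-- An infinite word is `r`-free: every factor of the form `x ++ y ++ x` with `x ≠ []`
(a repetition of period `|xy|` and exponent `|xyx|/|xy|`) has exponent `< r`. -/
def AlphaFree {α : Type*} (w : ℕ → α) (r : ℝ) : Prop :=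
  ∀ x y : List α, x ≠ [] → IsFactorOf (x ++ y ++ x) w →
    ((2 * x.length + y.length : ℝ) / (x.length + y.length)) < r

/-- An infinite word is `r⁺`-free: every such repetition has exponent `≤ r`. -/
def AlphaPlusFree {α : Type*} (w : ℕ → α) (r : ℝ) : Prop :=
  ∀ x y : List α, x ≠ [] → IsFactorOf (x ++ y ++ x) w →
    ((2 * x.length + y.length : ℝ) / (x.length + y.length)) ≤ r

/-- A finite word is `r⁺`-free. -/
def AlphaPlusFreeList {α : Type*} (u : List α) (r : ℝ) : Prop :=
  ∀ x y : List α, x ≠ [] → (x ++ y ++ x) <:+: u →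
    ((2 * x.length + y.length : ℝ) / (x.length + y.length)) ≤ r

/-!
Minimality forces every variable of `p` to occur at least twice. If `v` occurs once, then
`p = u v w` and `{u, w}` divides the split formula, hence is unavoidable: in any infinite word,
two disjoint copies of a long enough block contain `h(u)` in the first and `h(w)` in the second,
and sending `v` to the gap between them yields an occurrence of `p`. A doubled `p` of length at
most two is `AA`.

A doubled `p` of length at least three has an avoidable split: it is avoided by any infinite
word in which every repetition `x γ x` satisfies `|γ| > |p| |x|`. Such words exist over
`2 |p| + 6` letters, since counting bad one-letter extensions shows that the finite ones of
length `L` number at least `4 ^ L`, and König's lemma passes to an infinite word. In such a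
word a doubled pattern `r` can only occur if `|r| > |p|`, and comparing the lengths of the images
of the two halves of the split rules out the remaining cases.
-/

section Factors

variable {α : Type*}

@[simp] lemma length_extract (w : ℕ → α) (i n : ℕ) : (extract w i n).length = n := by
  simp [extract]

lemma extract_add (w : ℕ → α) (i m n : ℕ) :
    extract w i (m + n) = extract w i m ++ extract w (i + m) n := by
  simp [extract, List.range_add, Nat.add_assoc]

lemma eq_extract_of_append_eq_extract {w : ℕ → α} {u v : List α} {i n : ℕ}
    (h : u ++ v = extract w i n) :
    u = extract w i u.length ∧ v = extract w (i + u.length) v.length := by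
  have hn : n = u.length + v.length := by simpa using (congrArg List.length h).symm
  rw [hn, extract_add] at h
  exact List.append_inj h (by simp)

lemma exists_eq_extract_of_infix {w : ℕ → α} {u : List α} {i n : ℕ}
    (h : u <:+: extract w i n) :
    ∃ j, i ≤ j ∧ j + u.length ≤ i + n ∧ u = extract w j u.length := by
  obtain ⟨s, t, hst⟩ := h
  have hn := congrArg List.length hst
  simp only [List.length_append, length_extract] at hn
  have hsu := (eq_extract_of_append_eq_extract hst).1
  exact ⟨i + s.length, by omega, by omega, (eq_extract_of_append_eq_extract hsu).2⟩

lemma IsFactorOf.of_infix {w : ℕ → α} {u v : List α} (huv : u <:+: v) (hv : IsFactorOf v w) :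
    IsFactorOf u w := by
  obtain ⟨i, hi⟩ := hv
  obtain ⟨j, -, -, hj⟩ := exists_eq_extract_of_infix (hi ▸ huv)
  exact ⟨j, hj⟩

lemma IsFactorOf.exists_infix_extract_zero {w : ℕ → α} {u : List α} (hu : IsFactorOf u w) :
    ∃ M, u <:+: extract w 0 M := by
  obtain ⟨i, hi⟩ := hu
  refine ⟨i + u.length, extract w 0 i, [], ?_⟩
  rw [extract_add, Nat.zero_add, ← hi, List.append_nil]

lemma extract_zero_prefix_of_le (w : ℕ → α) {M N : ℕ} (h : M ≤ N) :
    extract w 0 M <+: extract w 0 N := by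
  obtain ⟨d, rfl⟩ := Nat.exists_eq_add_of_le h
  rw [extract_add]
  exact List.prefix_append _ _

lemma exists_extract_eq [Finite α] (w : ℕ → α) (K : ℕ) :
    ∃ i j, i + K < j ∧ extract w i K = extract w j K := by
  obtain ⟨a, -, b, -, hab, heq⟩ := Set.infinite_univ.exists_ne_map_eq_of_mapsTo
    (f := fun j => extract w (j * (K + 1)) K) (fun j _ => length_extract w _ K)
    (List.finite_length_eq α K)
  have key : ∀ a b, a < b → a * (K + 1) + K < b * (K + 1) := fun a b hab => by
    nlinarith
  rcases hab.lt_or_gt with hlt | hgt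
  · exact ⟨_, _, key a b hlt, heq⟩
  · exact ⟨_, _, key b a hgt, heq.symm⟩

end Factors

section Images

variable {V α : Type*}

@[simp] lemma patImage_nil (h : V → List α) : patImage h [] = [] := rfl

@[simp] lemma patImage_cons (h : V → List α) (v : V) (r : List V) :
    patImage h (v :: r) = h v ++ patImage h r := by
  simp [patImage]

@[simp] lemma patImage_append (h : V → List α) (r s : List V) :
    patImage h (r ++ s) = patImage h r ++ patImage h s := by
  simp [patImage]

lemma List.IsInfix.patImage (h : V → List α) {r s : List V} (hrs : r <:+: s) :
    _root_.patImage h r <:+: _root_.patImage h s := by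
  obtain ⟨a, b, rfl⟩ := hrs
  exact ⟨_root_.patImage h a, _root_.patImage h b, by simp⟩

lemma patImage_congr {h h' : V → List α} {r : List V} (H : ∀ v ∈ r, h v = h' v) :
    patImage h r = patImage h' r := by
  simp only [patImage, List.map_congr_left H]

end Images

section Compactness

variable {α : Type*}

lemma extract_getD_eq (s : List α) (d : α) : extract (fun i => s.getD i d) 0 s.length = s := by
  refine List.ext_getElem (by simp) fun i h₁ h₂ => ?_
  simp [extract, h₂]

lemma extract_zero_eq_ofFn (w : ℕ → α) (L : ℕ) :
    extract w 0 L = List.ofFn fun i : Fin L => w i := by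
  refine List.ext_getElem (by simp) fun i h₁ h₂ => ?_
  simp [extract]

lemma exists_forall_extract_of_prefix_closed [Finite α] (P : List α → Prop)
    (hP : ∀ s t, s <+: t → P t → P s) (hlong : ∀ L, ∃ s, P s ∧ s.length = L) :
    ∃ w : ℕ → α, ∀ L, P (extract w 0 L) := by
  let _ : TopologicalSpace α := ⊥
  have : DiscreteTopology α := ⟨rfl⟩
  let C : ℕ → Set (ℕ → α) := fun L => {w | P (extract w 0 L)}
  have hanti : ∀ L, C (L + 1) ⊆ C L := fun L w hw =>
    hP _ _ (extract_zero_prefix_of_le w (Nat.le_succ L)) hw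
  have hne : ∀ L, (C L).Nonempty := by
    intro L
    obtain ⟨s, hs, hlen⟩ := hlong (L + 1)
    obtain ⟨d, -⟩ := List.exists_cons_of_length_eq_add_one hlen
    refine ⟨fun i => s.getD i d, hanti L ?_⟩
    show P _
    rwa [← hlen, extract_getD_eq]
  have hclosed : ∀ L, IsClosed (C L) := by
    intro L
    have hC : C L = (fun w (i : Fin L) => w i) ⁻¹' {f | P (List.ofFn f)} := by
      ext w; simp [C, extract_zero_eq_ofFn]
    rw [hC]
    exact (isClosed_discrete _).preimage (by fun_prop)
  obtain ⟨w, hw⟩ := IsCompact.nonempty_iInter_of_sequence_nonempty_isCompact_isClosed C hanti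
    hne (isCompact_univ.of_isClosed_subset (hclosed 0) (Set.subset_univ _)) hclosed
  exact ⟨w, Set.mem_iInter.mp hw⟩

end Compactness

section Avoidability

variable {V : Type*}

lemma Avoidable.ne_nil {p : List V} (hp : Avoidable ({p} : Set (List V))) : p ≠ [] := by
  rintro rfl
  obtain ⟨n, w, hw⟩ := hp
  refine hw (fun _ => [w 0]) ⟨fun _ => List.cons_ne_nil _ _, ?_⟩
  rintro _ rfl
  exact ⟨0, by simp [extract]⟩

lemma not_avoidable_of_forall_infix {f f' : Set (List V)} (hf : ¬ Avoidable f)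
    (hinf : ∀ q ∈ f', ∃ r ∈ f, q <:+: r) : ¬ Avoidable f' := by
  rintro ⟨n, w, hw⟩
  refine hf ⟨n, w, fun h ⟨hne, hocc⟩ => hw h ⟨hne, fun q hq => ?_⟩⟩
  obtain ⟨r, hr, hqr⟩ := hinf q hq
  exact (hocc r hr).of_infix (hqr.patImage h)

lemma exists_length_forall_occurrence_of_not_avoidable {f : Set (List V)} (hf : f.Finite)
    (hna : ¬ Avoidable f) (n : ℕ) :
    ∃ K, ∀ c : List (Fin n), c.length = K →
      ∃ h : V → List (Fin n), NonErasing h ∧ ∀ p ∈ f, patImage h p <:+: c := by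
  by_contra! hcon
  let P : List (Fin n) → Prop := fun s =>
    ∀ h : V → List (Fin n), NonErasing h → ∃ p ∈ f, ¬ patImage h p <:+: s
  have hP : ∀ s t, s <+: t → P t → P s := fun s t hst ht h hne => by
    obtain ⟨p, hp, hpt⟩ := ht h hne
    exact ⟨p, hp, fun hps => hpt (hps.trans hst.isInfix)⟩
  have hlong : ∀ L, ∃ s, P s ∧ s.length = L := fun L => by
    obtain ⟨c, hc, hocc⟩ := hcon L
    exact ⟨c, hocc, hc⟩
  obtain ⟨w, hw⟩ := exists_forall_extract_of_prefix_closed P hP hlong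
  simp only [Avoidable, Avoids, not_exists, not_forall, not_not] at hna
  obtain ⟨h, hne, hocc⟩ := hna n w
  have hev : ∀ᶠ M in Filter.atTop, ∀ p ∈ f, patImage h p <:+: extract w 0 M := by
    refine (Filter.eventually_all_finite hf).2 fun p hp => ?_
    obtain ⟨M, hM⟩ := (hocc p hp).exists_infix_extract_zero
    exact Filter.eventually_atTop.2
      ⟨M, fun N hN => hM.trans (extract_zero_prefix_of_le w hN).isInfix⟩
  obtain ⟨M, hM⟩ := hev.exists
  obtain ⟨p, hp, hnot⟩ := hw M h hne
  exact hnot (hM p hp)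

/-- Since `{u, v}` is unavoidable, every long enough block contains both `h(u)` and `h(v)`;
pigeonhole gives two disjoint copies of one such block, and `x` is sent to the gap between
`h(u)` in the first copy and `h(v)` in the second. -/
lemma not_avoidable_append_cons {u v : List V} {x : V} (hxu : x ∉ u) (hxv : x ∉ v)
    (huv : ¬ Avoidable ({u, v} : Set (List V))) :
    ¬ Avoidable ({u ++ x :: v} : Set (List V)) := by
  classical
  rintro ⟨n, w, hw⟩
  obtain ⟨K, hK⟩ := exists_length_forall_occurrence_of_not_avoidable (Set.toFinite _) huv n
  obtain ⟨i, j, hij, hblock⟩ := exists_extract_eq w K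
  obtain ⟨h, hne, hocc⟩ := hK (extract w i K) (length_extract w i K)
  obtain ⟨π₁, -, hπ₁, hu⟩ := exists_eq_extract_of_infix (hocc u (by simp))
  obtain ⟨π₂, hπ₂, -, hv⟩ := exists_eq_extract_of_infix (hblock ▸ hocc v (by simp))
  set A := (patImage h u).length
  let gap := extract w (π₁ + A) (π₂ - (π₁ + A))
  have himage : patImage (Function.update h x gap) (u ++ x :: v)
      = patImage h u ++ gap ++ patImage h v := by
    have hu' : patImage (Function.update h x gap) u = patImage h u :=
      patImage_congr fun y hy => Function.update_of_ne (by rintro rfl; exact hxu hy) _ _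
    have hv' : patImage (Function.update h x gap) v = patImage h v :=
      patImage_congr fun y hy => Function.update_of_ne (by rintro rfl; exact hxv hy) _ _
    simp [hu', hv']
  refine hw (Function.update h x gap) ⟨fun y => ?_, ?_⟩
  · rcases eq_or_ne y x with rfl | hyx
    · simpa [gap, ← List.length_eq_zero_iff] using (by omega : π₂ - (π₁ + A) ≠ 0)
    · simpa [Function.update_of_ne hyx] using hne y
  · rintro _ rfl
    refine ⟨π₁, ?_⟩
    have hgap : π₁ + A + (π₂ - (π₁ + A)) = π₂ := by omega
    rw [himage, hu, hv]
    simp only [gap, List.length_append, length_extract, extract_add, ← Nat.add_assoc, hgap]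

end Avoidability

section Doubled

variable {V : Type*} [DecidableEq V]

def Doubled (p : List V) : Prop := ∀ v ∈ p, 2 ≤ p.count v

lemma exists_eq_append_cons_of_count_eq_one {l : List V} {x : V} (h : l.count x = 1) :
    ∃ u v, l = u ++ x :: v ∧ x ∉ u ∧ x ∉ v := by
  obtain ⟨u, v, rfl⟩ := List.append_of_mem (List.count_pos_iff.mp (by omega : 0 < l.count x))
  simp only [List.count_append, List.count_cons_self] at h
  exact ⟨u, v, rfl, List.count_eq_zero.mp (by omega), List.count_eq_zero.mp (by omega)⟩

lemma doubled_of_avoidable_of_not_avoidable_split {p : List V}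
    (hav : Avoidable ({p} : Set (List V)))
    (hsplit : ¬ Avoidable ({p.dropLast, p.tail} : Set (List V))) : Doubled p := by
  intro v hv
  by_contra! hlt
  have hone : p.count v = 1 := by have := List.count_pos_iff.mpr hv; omega
  obtain ⟨u, w, rfl, hvu, hvw⟩ := exists_eq_append_cons_of_count_eq_one hone
  refine not_avoidable_append_cons hvu hvw
    (not_avoidable_of_forall_infix hsplit fun q hq => ?_) hav
  rcases hq with rfl | rfl
  · refine ⟨_, Or.inl rfl, ?_⟩
    rw [List.dropLast_append_of_ne_nil (List.cons_ne_nil _ _)]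
    exact (List.prefix_append _ _).isInfix
  · refine ⟨_, Or.inr rfl, ?_⟩
    rw [List.append_cons, List.tail_append_of_ne_nil (by simp)]
    exact (List.suffix_append _ _).isInfix

lemma Doubled.two_le_count_of_cons {a v : V} {t : List V} (hdbl : Doubled (a :: t))
    (hv : v ∈ t) (hva : v ≠ a) : 2 ≤ t.count v := by
  simpa [List.count_cons, hva.symm] using hdbl v (List.mem_cons_of_mem a hv)

lemma Doubled.two_le_count_of_append_singleton {b v : V} {d : List V}
    (hdbl : Doubled (d ++ [b])) (hv : v ∈ d) (hvb : v ≠ b) : 2 ≤ d.count v := by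
  simpa [List.count_cons, hvb.symm] using hdbl v (List.mem_append_left [b] hv)

lemma Doubled.eq_pair {p : List V} (hdbl : Doubled p) (hp : p ≠ []) (hlen : p.length ≤ 2) :
    ∃ x, p = [x, x] := by
  match p, hp, hlen with
  | [x], _, _ => simpa using hdbl x (by simp)
  | [x, y], _, _ =>
    refine ⟨x, ?_⟩
    have := hdbl x (by simp)
    by_contra hne
    simp_all [List.count_cons]

end Doubled

section LongGaps

variable {α : Type*}

def LongGaps (R : ℕ) (l : List α) : Prop :=
  ∀ x γ : List α, x ≠ [] → x ++ γ ++ x <:+: l → R * x.length < γ.length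

lemma LongGaps.of_infix {R : ℕ} {l l' : List α} (hl : LongGaps R l) (h : l' <:+: l) :
    LongGaps R l' := fun x γ hx hinf => hl x γ hx (hinf.trans h)

lemma longGaps_nil (R : ℕ) : LongGaps R ([] : List α) := fun x γ hx hinf => by
  simp [List.infix_nil, hx] at hinf

lemma IsFactorOf.longGaps {R : ℕ} {W : ℕ → α} (hW : ∀ L, LongGaps R (extract W 0 L))
    {u : List α} (hu : IsFactorOf u W) : LongGaps R u := by
  obtain ⟨M, hM⟩ := hu.exists_infix_extract_zero
  exact (hW M).of_infix hM

lemma rtake_rdrop_append (s x γ : List α) :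
    ((s ++ x ++ γ).rdrop γ.length).rtake x.length = x := by
  rw [List.rdrop, show (s ++ x ++ γ).length - γ.length = (s ++ x).length by simp; omega,
    List.take_left, List.rtake, show (s ++ x).length - x.length = s.length by simp,
    List.drop_left]

/-- A repetition created by appending a letter to a word with long gaps is a suffix, so the
new word is its prefix `y` followed by a copy of a block of `y`. -/
lemma LongGaps.exists_eq_of_not_longGaps_concat {R : ℕ} {u : List α} {c : α}
    (hu : LongGaps R u) (hbad : ¬ LongGaps R (u ++ [c])) :
    ∃ i < u.length + 1, ∃ g < R * (i + 1) + 1, ∃ y, y <+: u ∧ y.length = u.length - i ∧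
      u ++ [c] = y ++ (y.rdrop g).rtake (i + 1) := by
  simp only [LongGaps, not_forall, not_lt] at hbad
  obtain ⟨x, γ, hx, hinf, hγ⟩ := hbad
  have hsuf : x ++ γ ++ x <:+ u ++ [c] :=
    (List.infix_concat_iff.mp hinf).resolve_right fun h => (hu x γ hx h).not_ge hγ
  obtain ⟨s, hs⟩ := hsuf
  have hxlen : 0 < x.length := List.length_pos_iff.mpr hx
  have hlen := congrArg List.length hs
  simp only [List.length_append, List.length_singleton] at hlen
  have hy : u ++ [c] = (s ++ x ++ γ) ++ x := by rw [← hs]; simp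
  refine ⟨x.length - 1, by omega, γ.length, by rw [Nat.sub_add_cancel hxlen]; omega,
    s ++ x ++ γ, ?_, by simp; omega, ?_⟩
  · obtain ⟨x', d, rfl⟩ := (List.eq_nil_or_concat x).resolve_left hx
    simp only [List.concat_eq_append, ← List.append_assoc] at hy ⊢
    exact ⟨x', (List.append_inj' hy rfl).1.symm⟩
  · rw [Nat.sub_add_cancel hxlen, rtake_rdrop_append, hy]

end LongGaps

section Counting

variable (α : Type*) [Fintype α]

noncomputable def longGapWords (R L : ℕ) : Finset (List α) :=
  ((List.finite_length_eq α L).inter_of_left {l | LongGaps R l}).toFinset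

variable {α}

@[simp] lemma mem_longGapWords {R L : ℕ} {l : List α} :
    l ∈ longGapWords α R L ↔ l.length = L ∧ LongGaps R l :=
  Set.Finite.mem_toFinset _

/-- Each one-letter extension of a word with long gaps either has long gaps, or is determined
by the length `i + 1` and gap `g` of its repetition together with its prefix of length `L - i`. -/
lemma card_mul_card_longGapWords_le (R L : ℕ) :
    Fintype.card α * (longGapWords α R L).card ≤ (longGapWords α R (L + 1)).card +
      ∑ i ∈ Finset.range (L + 1), (R * (i + 1) + 1) * (longGapWords α R (L - i)).card := by
  classical
  set S := longGapWords α R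
  let B := fun i g => (S (L - i)).image fun y => y ++ (y.rdrop g).rtake (i + 1)
  have hmaps : ∀ q ∈ S L ×ˢ Finset.univ, q.1 ++ [q.2] ∈
      S (L + 1) ∪ (Finset.range (L + 1)).biUnion fun i =>
        (Finset.range (R * (i + 1) + 1)).biUnion (B i) := by
    rintro ⟨u, c⟩ hq
    obtain ⟨hlen, hu⟩ := mem_longGapWords.mp (Finset.mem_product.mp hq).1
    by_cases hgood : LongGaps R (u ++ [c])
    · exact Finset.mem_union_left _ (mem_longGapWords.mpr ⟨by simp [hlen], hgood⟩)
    obtain ⟨i, hi, g, hg, y, hyu, hylen, hy⟩ := hu.exists_eq_of_not_longGaps_concat hgood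
    refine Finset.mem_union_right _ (Finset.mem_biUnion.mpr ⟨i, by simpa [hlen] using hi,
      Finset.mem_biUnion.mpr ⟨g, Finset.mem_range.mpr hg,
        Finset.mem_image.mpr ⟨y, ?_, hy.symm⟩⟩⟩)
    exact mem_longGapWords.mpr ⟨by rw [hylen, hlen], hu.of_infix hyu.isInfix⟩
  have hinj : Set.InjOn (fun q : List α × α => q.1 ++ [q.2])
      (↑(S L ×ˢ (Finset.univ : Finset α)) : Set (List α × α)) := by
    rintro ⟨u, c⟩ - ⟨u', c'⟩ - h
    obtain ⟨rfl, rfl⟩ : u = u' ∧ c = c' := by simpa using h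
    rfl
  calc Fintype.card α * (S L).card = (S L ×ˢ Finset.univ).card := by
        rw [Finset.card_product, Finset.card_univ, mul_comm]
    _ ≤ _ := Finset.card_le_card_of_injOn _ hmaps hinj
    _ ≤ (S (L + 1)).card + ∑ i ∈ Finset.range (L + 1),
          ((Finset.range (R * (i + 1) + 1)).biUnion (B i)).card :=
        (Finset.card_union_le _ _).trans (Nat.add_le_add_left (Finset.card_biUnion_le) _)
    _ ≤ _ := by
        gcongr with i
        refine (Finset.card_biUnion_le_card_mul _ _ _ fun g _ => Finset.card_image_le).trans ?_
        rw [Finset.card_range]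

lemma sum_le_two_mul_of_pow_two_mul_le {z : ℕ → ℕ} {x M : ℕ}
    (h : ∀ i < M, 2 ^ i * z i ≤ x) :
    ∑ i ∈ Finset.range M, z i ≤ 2 * x := by
  have key : ∀ i ∈ Finset.range M, (z i : ℝ) ≤ x * (1 / 2) ^ i := fun i hi => by
    have hi := h i (Finset.mem_range.mp hi)
    rw [one_div, inv_pow, ← div_eq_mul_inv, le_div_iff₀ (by positivity), mul_comm]
    exact_mod_cast hi
  have : (∑ i ∈ Finset.range M, z i : ℝ) ≤ 2 * x :=
    calc (∑ i ∈ Finset.range M, z i : ℝ)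
        ≤ ∑ i ∈ Finset.range M, x * (1 / 2 : ℝ) ^ i :=
          Finset.sum_le_sum key
      _ = x * ∑ i ∈ Finset.range M, (1 / 2 : ℝ) ^ i := (Finset.mul_sum _ _ _).symm
      _ ≤ x * 2 := by gcongr; exact sum_geometric_two_le M
      _ = 2 * x := mul_comm _ _
  exact_mod_cast this

lemma four_mul_le_of_le_add_sum {R : ℕ} {N : ℕ → ℕ}
    (hN : ∀ L, (2 * R + 6) * N L ≤ N (L + 1) +
      ∑ i ∈ Finset.range (L + 1), (R * (i + 1) + 1) * N (L - i)) (L : ℕ) :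
    4 * N L ≤ N (L + 1) := by
  induction L using Nat.strong_induction_on with
  | _ L ih =>
  have hpow : ∀ i ≤ L, 4 ^ i * N (L - i) ≤ N L := by
    intro i
    induction i with
    | zero => simp
    | succ i ihi =>
      intro hi
      have hstep := ih (L - i - 1) (by omega)
      rw [show L - i - 1 + 1 = L - i by omega] at hstep
      calc 4 ^ (i + 1) * N (L - (i + 1)) = 4 ^ i * (4 * N (L - i - 1)) := by
            rw [pow_succ, Nat.sub_add_eq, mul_assoc]
        _ ≤ 4 ^ i * N (L - i) := Nat.mul_le_mul_left _ hstep
        _ ≤ N L := ihi (by omega)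
  have hsum :
      ∑ i ∈ Finset.range (L + 1), (R * (i + 1) + 1) * N (L - i) ≤ (R + 1) * (2 * N L) :=
    calc ∑ i ∈ Finset.range (L + 1), (R * (i + 1) + 1) * N (L - i)
        ≤ ∑ i ∈ Finset.range (L + 1), (R + 1) * ((i + 1) * N (L - i)) :=
          Finset.sum_le_sum fun i _ => by nlinarith
      _ = (R + 1) * ∑ i ∈ Finset.range (L + 1), (i + 1) * N (L - i) :=
          (Finset.mul_sum _ _ _).symm
      _ ≤ (R + 1) * (2 * N L) := by
          refine Nat.mul_le_mul_left _ (sum_le_two_mul_of_pow_two_mul_le fun i hi => ?_)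
          have h2 : i + 1 ≤ 2 ^ i := Nat.lt_two_pow_self
          calc 2 ^ i * ((i + 1) * N (L - i)) ≤ 2 ^ i * (2 ^ i * N (L - i)) := by gcongr
            _ = 4 ^ i * N (L - i) := by rw [← mul_assoc, ← mul_pow]; norm_num
            _ ≤ N L := hpow i (by omega)
  nlinarith [hN L]

lemma exists_longGaps_word (R : ℕ) :
    ∃ W : ℕ → Fin (2 * R + 6), ∀ L, LongGaps R (extract W 0 L) := by
  have hgrowth :=
    four_mul_le_of_le_add_sum (N := fun L => (longGapWords (Fin (2 * R + 6)) R L).card)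
    fun L => by simpa using card_mul_card_longGapWords_le (α := Fin (2 * R + 6)) R L
  have hpos : ∀ L, 0 < (longGapWords (Fin (2 * R + 6)) R L).card := by
    intro L
    induction L with
    | zero => exact Finset.card_pos.mpr ⟨[], mem_longGapWords.mpr ⟨rfl, longGaps_nil R⟩⟩
    | succ L ih => have := hgrowth L; omega
  refine exists_forall_extract_of_prefix_closed _ (fun s t hst ht => ht.of_infix hst.isInfix)
    fun L => ?_
  obtain ⟨l, hl⟩ := Finset.card_pos.mp (hpos L)
  exact ⟨l, (mem_longGapWords.mp hl).2, (mem_longGapWords.mp hl).1⟩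

end Counting

section Patterns

variable {V α : Type*} {R : ℕ} {h : V → List α}

lemma exists_eq_append_cons_append_cons [DecidableEq V] {r : List V} {v : V}
    (hv : 2 ≤ r.count v) : ∃ s₁ s₂ s₃, r = s₁ ++ v :: s₂ ++ v :: s₃ := by
  obtain ⟨s, t, rfl⟩ := List.append_of_mem (List.count_pos_iff.mp (by omega : 0 < r.count v))
  simp only [List.count_append, List.count_cons_self] at hv
  rcases Nat.eq_zero_or_pos (t.count v) with ht | ht
  · have hs : 0 < s.count v := by omega
    obtain ⟨s₁, s₂, rfl⟩ := List.append_of_mem (List.count_pos_iff.mp hs)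
    exact ⟨s₁, s₂, t, by simp⟩
  · obtain ⟨s₂, s₃, rfl⟩ := List.append_of_mem (List.count_pos_iff.mp ht)
    exact ⟨s, s₂, s₃, by simp⟩

lemma LongGaps.mul_length_lt_of_two_le_count [DecidableEq V] {r : List V} {v : V}
    (hr : LongGaps R (patImage h r)) (hv : h v ≠ []) (hcount : 2 ≤ r.count v) :
    R * (h v).length < (patImage h r).length := by
  obtain ⟨s₁, s₂, s₃, rfl⟩ := exists_eq_append_cons_append_cons hcount
  have hinf : h v ++ patImage h s₂ ++ h v <:+: patImage h (s₁ ++ v :: s₂ ++ v :: s₃) :=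
    ⟨patImage h s₁, patImage h s₃, by simp⟩
  have := hinf.length_le
  simp only [List.length_append] at this
  have := hr _ _ hv hinf
  omega

lemma mul_length_patImage_add_le {e : List V} {m : ℕ} (he : ∀ v ∈ e, R * (h v).length < m) :
    R * (patImage h e).length + e.length ≤ e.length * m := by
  induction e with
  | nil => simp
  | cons v e ih =>
    have hv := he v List.mem_cons_self
    have ih := ih fun u hu => he u (List.mem_cons_of_mem v hu)
    simp only [patImage_cons, List.length_append, List.length_cons]
    nlinarith

lemma Doubled.lt_length [DecidableEq V] {r : List V} (hdbl : Doubled r) (hr : r ≠ [])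
    (hne : NonErasing h) (hgaps : LongGaps R (patImage h r)) : R < r.length := by
  have := mul_length_patImage_add_le fun v hv =>
    hgaps.mul_length_lt_of_two_le_count (hne v) (hdbl v hv)
  have : 0 < r.length := List.length_pos_iff.mpr hr
  by_contra! hR
  nlinarith

lemma LongGaps.mul_length_add_le_of_count_eq_one [DecidableEq V] {r : List V} {b : V}
    (hr : LongGaps R (patImage h r)) (hne : NonErasing h) (hb : r.count b = 1)
    (hdbl : ∀ v ∈ r, v ≠ b → 2 ≤ r.count v) :
    R * (patImage h r).length + (r.length - 1) ≤
      (r.length - 1) * (patImage h r).length + R * (h b).length := by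
  obtain ⟨e₁, e₂, rfl, hb₁, hb₂⟩ := exists_eq_append_cons_of_count_eq_one hb
  have hmem : ∀ v ∈ e₁ ++ e₂, v ∈ e₁ ++ b :: e₂ ∧ v ≠ b := by
    intro v hv
    rcases List.mem_append.mp hv with hv | hv
    · exact ⟨by simp [hv], by rintro rfl; exact hb₁ hv⟩
    · exact ⟨by simp [hv], by rintro rfl; exact hb₂ hv⟩
  have he := mul_length_patImage_add_le (h := h) (e := e₁ ++ e₂)
    (m := (patImage h (e₁ ++ b :: e₂)).length) fun v hv =>
      hr.mul_length_lt_of_two_le_count (hne v) (hdbl v (hmem v hv).1 (hmem v hv).2)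
  have hlen : (patImage h (e₁ ++ b :: e₂)).length =
      (patImage h (e₁ ++ e₂)).length + (h b).length := by
    simp; omega
  have hrlen : (e₁ ++ b :: e₂).length - 1 = (e₁ ++ e₂).length := by simp
  rw [hrlen, hlen]
  rw [hlen] at he
  nlinarith

lemma LongGaps.count_eq_one [DecidableEq V] {r : List V} {b : V}
    (hgaps : LongGaps R (patImage h r)) (hne : NonErasing h) (hr : r ≠ []) (hlen : r.length ≤ R)
    (hdbl : ∀ v ∈ r, v ≠ b → 2 ≤ r.count v) : r.count b = 1 := by
  by_contra hb
  refine absurd (Doubled.lt_length (fun v hv => ?_) hr hne hgaps) (by omega)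
  rcases eq_or_ne v b with rfl | hvb
  · have := List.count_pos_iff.mpr hv; omega
  · exact hdbl v hv hvb

end Patterns

section Split

variable {V : Type*} [DecidableEq V]

/-- If neither half of the split is doubled, then its single letters are `b` in `a :: q` and
`a` in `q ++ [b]`. For `a = b` the middle `q` is doubled; otherwise each half has an image
more than twice as long as the other. -/
lemma Doubled.false_of_longGaps {α : Type*} {h : V → List α} {a b : V} {q : List V}
    (hdbl : Doubled (a :: (q ++ [b]))) (hq : q ≠ []) (hne : NonErasing h)
    (hd : LongGaps (q.length + 2) (patImage h (a :: q)))
    (ht : LongGaps (q.length + 2) (patImage h (q ++ [b]))) : False := by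
  have hD : ∀ v ∈ a :: q, v ≠ b → 2 ≤ (a :: q).count v := fun v hv hvb =>
    Doubled.two_le_count_of_append_singleton hdbl hv hvb
  have hT : ∀ v ∈ q ++ [b], v ≠ a → 2 ≤ (q ++ [b]).count v := fun v hv hva =>
    hdbl.two_le_count_of_cons hv hva
  have hb := hd.count_eq_one hne (List.cons_ne_nil a q) (by simp) hD
  have ha := ht.count_eq_one hne (by simp) (by simp) hT
  rcases eq_or_ne a b with rfl | hab
  · have hq_dbl : Doubled q := fun v hv => by
      have hva : v ≠ a := by
        rintro rfl
        simp only [List.count_cons_self, Nat.add_eq_right, List.count_eq_zero] at hb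
        exact hb hv
      simpa [List.count_cons, hva.symm] using hT v (by simp [hv]) hva
    have hq_gaps := hd.of_infix ((List.suffix_cons a q).isInfix.patImage h)
    exact absurd (hq_dbl.lt_length hq hne hq_gaps) (by omega)
  · have hbt := hT b (by simp) hab.symm
    have hda := hD a (by simp) hab
    have hd_le := hd.mul_length_add_le_of_count_eq_one hne hb hD
    have ht_le := ht.mul_length_add_le_of_count_eq_one hne ha hT
    have hb_lt := ht.mul_length_lt_of_two_le_count (hne b) hbt
    have ha_lt := hd.mul_length_lt_of_two_le_count (hne a) hda
    simp only [List.length_cons, List.length_append, List.length_nil, Nat.zero_add,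
      Nat.add_sub_cancel] at hd_le ht_le
    nlinarith

lemma Doubled.avoidable_split {p : List V} (hdbl : Doubled p) (hlen : 3 ≤ p.length) :
    Avoidable ({p.dropLast, p.tail} : Set (List V)) := by
  obtain ⟨a, t, rfl⟩ :=
    List.exists_cons_of_ne_nil (List.ne_nil_of_length_pos (l := p) (by omega))
  obtain ⟨q, b, rfl⟩ := (List.eq_nil_or_concat t).resolve_left (by rintro rfl; simp at hlen)
  rw [List.concat_eq_append] at hdbl ⊢
  have hq : q ≠ [] := by rintro rfl; simp at hlen
  obtain ⟨W, hW⟩ := exists_longGaps_word (q.length + 2)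
  refine ⟨_, W, fun h ⟨hne, hocc⟩ => hdbl.false_of_longGaps hq hne ?_ ?_⟩
  · simpa [List.dropLast_cons_of_ne_nil] using (hocc _ (Or.inl rfl)).longGaps hW
  · simpa using (hocc _ (Or.inr rfl)).longGaps hW

end Split

theorem stmt9_general {V : Type*} (p : List V)
    (hav : Avoidable ({p} : Set (List V)))
    (hsplit : ¬ Avoidable ({p.dropLast, p.tail} : Set (List V))) :
    ∃ x : V, p = [x, x] := by
  classical
  have hdbl := doubled_of_avoidable_of_not_avoidable_split hav hsplit
  by_cases hlen : p.length ≤ 2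
  · exact hdbl.eq_pair hav.ne_nil hlen
  · exact absurd (hdbl.avoidable_split (by omega)) hsplit

/-- the only minimally avoidable formula with exactly one fragment is AA:
if the one-fragment formula `{p}` is avoidable and splitting it (replacing `p` by its
prefix and suffix of length |p|-1) gives an unavoidable formula, then `p = AA`. -/
theorem stmt9 {V : Type*} (p : List V) (hp : p ≠ [])
    (hav : Avoidable ({p} : Set (List V)))
    (hsplit : ¬ Avoidable ({p.dropLast, p.tail} : Set (List V))) :
    ∃ x : V, p = [x, x] :=
  stmt9_general p hav hsplit
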